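/- arXiv:1809.10418 — 2 statements merged into one kernel-verified Lean document; each statement's English description precedes it below -/
import Mathlib

section
/- Let μ(dx dy) be the pushforward of the standard Gaussian measure on ℝ under the map x ↦ (x, sin x). Then the only polynomial p ∈ ℝ[x,y] with ∫ |p|² dμ = 0 is the zero polynomial. -/
open MeasureTheory ProbabilityTheory

/-- The pushforward of the standard Gaussian measure on `ℝ` under `x ↦ (x, sin x)`. -/
noncomputable def sinCurveGaussian : Measure (ℝ × ℝ) :=
  Measure.map (fun x : ℝ => (x, Real.sin x)) (gaussianReal 0 1)

/-!
Pulled back to the Gaussian, which charges every open set, the hypothesis says that the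
continuous function `|p(x, sin x)|²` vanishes everywhere; it is integrable because the Gaussian
has moments of all orders and `sin` is bounded. As `sin` is `2π`-periodic, for each `x` the
polynomial `t ↦ p(t, sin x)` has all the roots `x + 2πn`, so `p` vanishes on `ℝ × [-1, 1]`,
a product of infinite sets, and is therefore zero.
-/

namespace MvPolynomial

lemma eval_aeval_X_C {R : Type*} [CommSemiring R] (p : MvPolynomial (Fin 2) R) (t y : R) :
    (aeval ![Polynomial.X, Polynomial.C y] p).eval t = eval ![t, y] p := by
  induction p using MvPolynomial.induction_on with
  | C a => simp
  | add p q hp hq => simp [hp, hq]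
  | mul_X p i hp => fin_cases i <;> simp [hp]

variable {K : Type*} [Field K] [CharZero K] {f : K → K} {c : K} {p : MvPolynomial (Fin 2) K}

lemma eval_eq_zero_of_periodic_of_eval_graph_eq_zero (hf : Function.Periodic f c) (hc : c ≠ 0)
    (h : ∀ x, eval ![x, f x] p = 0) (t x : K) : eval ![t, f x] p = 0 := by
  suffices aeval ![Polynomial.X, Polynomial.C (f x)] p = 0 by
    rw [← eval_aeval_X_C, this, Polynomial.eval_zero]
  apply Polynomial.eq_zero_of_infinite_isRoot
  refine Set.infinite_of_injective_forall_mem (f := fun n : ℕ => x + n * c) ?_ fun n => ?_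
  · intro a b hab
    simpa [hc] using hab
  · simpa [eval_aeval_X_C, hf.nat_mul n x] using h (x + n * c)

theorem eq_zero_of_periodic_of_eval_graph_eq_zero (hf : Function.Periodic f c) (hc : c ≠ 0)
    (hrange : (Set.range f).Infinite) (h : ∀ x, eval ![x, f x] p = 0) : p = 0 := by
  refine funext_set ![Set.univ, Set.range f] (Fin.forall_fin_two.2 ⟨Set.infinite_univ, hrange⟩)
    fun v hv => ?_
  obtain ⟨x, hx⟩ := hv 1 trivial
  have hv_eq : v = ![v 0, f x] := by
    ext i
    fin_cases i <;> simp [hx]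
  rw [hv_eq, map_zero, eval_eq_zero_of_periodic_of_eval_graph_eq_zero hf hc h]

lemma integrable_eval_of_integrable_pow {μ : Measure ℝ}
    (hμ : ∀ n : ℕ, Integrable (fun x => x ^ n) μ) {g : ℝ → ℝ} (hg : AEStronglyMeasurable g μ)
    {C : ℝ}
    (hgC : ∀ x, |g x| ≤ C) (p : MvPolynomial (Fin 2) ℝ) :
    Integrable (fun x => eval ![x, g x] p) μ := by
  simp only [eval_eq', Fin.prod_univ_two, Matrix.cons_val_zero, Matrix.cons_val_one]
  refine integrable_finsetSum _ fun m _ => ((hμ (m 0)).mul_bdd (c := C ^ m 1) ?_ ?_).const_mul _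
  · exact hg.pow _
  · exact Filter.Eventually.of_forall fun x => by
      rw [Real.norm_eq_abs, abs_pow]
      exact pow_le_pow_left₀ (abs_nonneg _) (hgC x) _

end MvPolynomial

lemma integrable_pow_gaussianReal (μ : ℝ) (v : NNReal) (n : ℕ) :
    Integrable (fun x => x ^ n) (gaussianReal μ v) :=
  integrable_pow_of_mem_interior_integrableExpSet
    (by simp [integrableExpSet_fun_id_gaussianReal]) n

lemma isOpenPosMeasure_gaussianReal (μ : ℝ) {v : NNReal} (hv : v ≠ 0) :
    (gaussianReal μ v).IsOpenPosMeasure :=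
  (gaussianReal_absolutelyContinuous' μ hv).isOpenPosMeasure

lemma Continuous.eq_zero_of_integral_eq_zero {X : Type*} [TopologicalSpace X] [MeasurableSpace X]
    [OpensMeasurableSpace X] {μ : Measure X} [μ.IsOpenPosMeasure] {f : X → ℝ} (hf : Continuous f)
    (hf_nonneg : 0 ≤ f) (hfi : Integrable f μ) (h : ∫ x, f x ∂μ = 0) : f = 0 :=
  (hf.ae_eq_iff_eq μ continuous_zero).1 ((integral_eq_zero_iff_of_nonneg hf_nonneg hfi).1 h)

lemma eval_sin_eq_zero_of_integral_sinCurveGaussian_eq_zero (p : MvPolynomial (Fin 2) ℝ)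
    (hp : ∫ z, |MvPolynomial.eval ![z.1, z.2] p| ^ 2 ∂sinCurveGaussian = 0) (x : ℝ) :
    MvPolynomial.eval ![x, Real.sin x] p = 0 := by
  set F : ℝ → ℝ := fun x => |MvPolynomial.eval ![x, Real.sin x] p| ^ 2
  have hcont : Continuous F :=
    (((MvPolynomial.continuous_eval p).comp (by fun_prop)).abs).pow 2
  have hint : Integrable F (gaussianReal 0 1) := by
    convert MvPolynomial.integrable_eval_of_integrable_pow
      (integrable_pow_gaussianReal 0 1)
      Real.continuous_sin.aestronglyMeasurable Real.abs_sin_le_one (p ^ 2) using 2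
    exact (sq_abs _).trans (map_pow _ _ _).symm
  have hF_integral : ∫ x, F x ∂gaussianReal 0 1 = 0 := by
    have hG : Continuous fun z : ℝ × ℝ => |MvPolynomial.eval ![z.1, z.2] p| ^ 2 :=
      (((MvPolynomial.continuous_eval p).comp (by fun_prop)).abs).pow 2
    rwa [sinCurveGaussian, integral_map (by fun_prop) hG.aestronglyMeasurable] at hp
  have := isOpenPosMeasure_gaussianReal 0 one_ne_zero
  have hF_zero : F = 0 :=
    hcont.eq_zero_of_integral_eq_zero (fun _ => sq_nonneg _) hint hF_integral
  simpa [F] using congrFun hF_zero x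

theorem no_nonzero_null_polynomial_on_sin_curve (p : MvPolynomial (Fin 2) ℝ)
    (hp : ∫ z, |MvPolynomial.eval ![z.1, z.2] p| ^ 2 ∂sinCurveGaussian = 0) :
    p = 0 :=
  MvPolynomial.eq_zero_of_periodic_of_eval_graph_eq_zero Real.sin_periodic Real.two_pi_pos.ne'
    Real.range_sin_infinite (eval_sin_eq_zero_of_integral_sinCurveGaussian_eq_zero p hp)
end

section
/- For the uniform probability measure μ on the unit circle in ℝ², every polynomial of the form (x² + y² − 1)·x^α·y^β with α, β ≥ 0 satisfies ∫ |(x²+y²−1)x^α y^β|² dμ = 0, and for each n ≥ 2 the set {p_n, q_n} ∪ {(x²+y²−1)x^α y^β : α+β = n−2} is a linearly independent family of n+1 polynomials each of degree n. -/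
open MeasureTheory MvPolynomial

/-- The uniform probability measure on the unit circle in `ℝ²`. -/
noncomputable def circleMeasure : Measure (ℝ × ℝ) :=
  Measure.map (fun θ : ℝ => (Real.cos θ, Real.sin θ))
    ((ENNReal.ofReal (2 * Real.pi))⁻¹ • volume.restrict (Set.Ico 0 (2 * Real.pi)))

/-- The pair `(u_n, v_n)` of polynomials in `ℝ[x,y]` with `(x+iy)^n = u_n + i v_n`,
defined by the recursion `u_{n+1} = x u_n - y v_n`, `v_{n+1} = x v_n + y u_n`. -/
noncomputable def uvPoly : ℕ → MvPolynomial (Fin 2) ℝ × MvPolynomial (Fin 2) ℝ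
  | 0 => (1, 0)
  | n + 1 => (X 0 * (uvPoly n).1 - X 1 * (uvPoly n).2,
      X 0 * (uvPoly n).2 + X 1 * (uvPoly n).1)

/-- The family `{p_n, q_n} ∪ {(x²+y²-1) x^α y^β : α + β = n - 2}` of `n+1` polynomials,
where `p_n = √2 u_n`, `q_n = √2 v_n`. -/
noncomputable def gradationBasis (n : ℕ) : Fin (n + 1) → MvPolynomial (Fin 2) ℝ :=
  fun i =>
    if i = 0 then C (Real.sqrt 2) * (uvPoly n).1
    else if i = 1 then C (Real.sqrt 2) * (uvPoly n).2
    else (X 0 ^ 2 + X 1 ^ 2 - 1) * X 0 ^ ((i : ℕ) - 2) * X 1 ^ (n - (i : ℕ))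

lemma uvPoly_homog (n : ℕ) :
    ((uvPoly n).1).IsHomogeneous n ∧ ((uvPoly n).2).IsHomogeneous n := by
  induction n with
  | zero => exact ⟨by simpa [uvPoly] using isHomogeneous_one (Fin 2) ℝ,
      by simpa [uvPoly] using isHomogeneous_zero (Fin 2) ℝ 0⟩
  | succ n ih =>
    refine ⟨?_, ?_⟩
    · simpa [uvPoly, Nat.add_comm 1 n] using
        (((isHomogeneous_X ℝ 0).mul ih.1).sub ((isHomogeneous_X ℝ 1).mul ih.2))
    · simpa [uvPoly, Nat.add_comm 1 n] using
        (((isHomogeneous_X ℝ 0).mul ih.2).add ((isHomogeneous_X ℝ 1).mul ih.1))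

lemma coeff_uv_xn (n : ℕ) :
    coeff (Finsupp.single 0 n) (uvPoly n).1 = 1 ∧
    coeff (Finsupp.single 0 n) (uvPoly n).2 = 0 := by
  induction n with
  | zero => simp [uvPoly]
  | succ n ih =>
    have h : (Finsupp.single (0 : Fin 2) (n+1)) = Finsupp.single 0 1 + Finsupp.single 0 n := by
      rw [← Finsupp.single_add]; ring_nf
    have h1 : (1 : Fin 2) ∉ (Finsupp.single (0 : Fin 2) (n+1)).support := by
      simp [Finsupp.support_single_ne_zero]
    constructor
    · simp only [uvPoly, coeff_sub, h, coeff_X_mul]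
      rw [← h, coeff_X_mul', if_neg h1, ih.1, sub_zero]
    · simp only [uvPoly, coeff_add, h, coeff_X_mul]
      rw [← h, coeff_X_mul', if_neg h1, ih.2, add_zero]

lemma coeff_uv_xy (n : ℕ) :
    coeff (Finsupp.single 0 n + Finsupp.single 1 1) (uvPoly (n+1)).1 = 0 ∧
    coeff (Finsupp.single 0 n + Finsupp.single 1 1) (uvPoly (n+1)).2 = n + 1 := by
  induction n with
  | zero =>
    simp [uvPoly, coeff_X, coeff_X', Finsupp.single_eq_single_iff]
  | succ n ih =>
    have h0 : (Finsupp.single (0 : Fin 2) (n+1) + Finsupp.single 1 1)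
        = Finsupp.single 0 1 + (Finsupp.single 0 n + Finsupp.single 1 1) := by
      rw [← add_assoc, ← Finsupp.single_add]; ring_nf
    have h1 : (Finsupp.single (0 : Fin 2) (n+1) + Finsupp.single 1 1)
        = Finsupp.single 1 1 + Finsupp.single 0 (n+1) := by
      rw [add_comm]
    constructor
    · show coeff _ (X 0 * (uvPoly (n+1)).1 - X 1 * (uvPoly (n+1)).2) = 0
      rw [coeff_sub, h0, coeff_X_mul, ← h0, h1, coeff_X_mul, ih.1,
        (coeff_uv_xn (n+1)).2, sub_zero]
    · show coeff _ (X 0 * (uvPoly (n+1)).2 + X 1 * (uvPoly (n+1)).1) = ((n+1:ℕ):ℝ) + 1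
      rw [coeff_add, h0, coeff_X_mul, ← h0, h1, coeff_X_mul, ih.2,
        (coeff_uv_xn (n+1)).1]
      push_cast; ring

lemma X0X1pow (a b : ℕ) : (X 0 : MvPolynomial (Fin 2) ℝ)^a * X 1 ^ b
    = monomial (Finsupp.single 0 a + Finsupp.single 1 b) 1 := by
  simp [X_pow_eq_monomial, monomial_mul]

lemma pair_eq_iff {a b a' b' : ℕ} :
    (Finsupp.single (0:Fin 2) a + Finsupp.single 1 b = Finsupp.single 0 a' + Finsupp.single 1 b')
    ↔ (a = a' ∧ b = b') := by
  constructor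
  · intro h
    constructor
    · have := DFunLike.congr_fun h 0; simpa using this
    · have := DFunLike.congr_fun h 1; simpa using this
  · rintro ⟨rfl, rfl⟩; rfl

lemma prod_expand (a b : ℕ) :
    ((X 0:MvPolynomial (Fin 2) ℝ)^2 + X 1^2 - 1) * X 0 ^ a * X 1 ^ b
    = monomial (Finsupp.single 0 (a+2) + Finsupp.single 1 b) 1
      + monomial (Finsupp.single 0 a + Finsupp.single 1 (b+2)) 1
      - monomial (Finsupp.single 0 a + Finsupp.single 1 b) 1 := by
  rw [← X0X1pow, ← X0X1pow, ← X0X1pow]; ring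

lemma deg_pair (a b : ℕ) :
    (Finsupp.single (0:Fin 2) a + Finsupp.single 1 b).sum (fun _ e => e) = a + b := by
  classical
  rw [Finsupp.sum_add_index (by simp) (by simp)]
  simp

lemma degree_pair (a b : ℕ) :
    (Finsupp.single (0:Fin 2) a + Finsupp.single 1 b).degree = a + b := by
  have : (Finsupp.single (0:Fin 2) a + Finsupp.single 1 b).degree
      = (Finsupp.single (0:Fin 2) a + Finsupp.single 1 b).sum (fun _ e => e) := rfl
  rw [this, deg_pair]

lemma coeff_prod_top (a b : ℕ) :
    coeff (Finsupp.single 0 (a+2) + Finsupp.single 1 b)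
      (((X 0:MvPolynomial (Fin 2) ℝ)^2 + X 1^2 - 1) * X 0 ^ a * X 1 ^ b) = 1 := by
  rw [prod_expand]
  simp only [coeff_sub, coeff_add, coeff_monomial, pair_eq_iff]
  norm_num

lemma td_prod (a b : ℕ) :
    ((((X 0:MvPolynomial (Fin 2) ℝ)^2 + X 1^2 - 1) * X 0 ^ a * X 1 ^ b)).totalDegree
      = a + b + 2 := by
  apply le_antisymm
  · have h1 : ((X 0:MvPolynomial (Fin 2) ℝ)^2 + X 1^2 - 1).totalDegree ≤ 2 := by
      rw [sub_eq_add_neg]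
      refine (totalDegree_add _ _).trans ?_
      refine max_le ((totalDegree_add _ _).trans ?_) ?_
      · simp [totalDegree_X_pow]
      · rw [totalDegree_neg, totalDegree_one]; omega
    refine (totalDegree_mul _ _).trans ?_
    refine (add_le_add ((totalDegree_mul _ _).trans (add_le_add h1 le_rfl)) le_rfl).trans ?_
    simp [totalDegree_X_pow]; omega
  · have hs := le_totalDegree (p := (((X 0:MvPolynomial (Fin 2) ℝ)^2 + X 1^2 - 1) * X 0 ^ a * X 1 ^ b))
      (s := Finsupp.single 0 (a+2) + Finsupp.single 1 b) ?_
    · rwa [deg_pair, show a + 2 + b = a + b + 2 by omega] at hs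
    · rw [mem_support_iff, coeff_prod_top]; norm_num

section Main
variable {n : ℕ}

lemma fin_val_one (hn : 2 ≤ n) : ((1 : Fin (n+1)) : ℕ) = 1 := by
  rw [Fin.val_one']; exact Nat.mod_eq_of_lt (by omega)

lemma fin_two_le {j : Fin (n+1)} (hn : 2 ≤ n) (h0 : j ≠ 0) (h1 : j ≠ 1) : 2 ≤ (j:ℕ) := by
  rcases Nat.lt_or_ge (j:ℕ) 2 with h | h
  · interval_cases h' : (j:ℕ)
    · exact absurd (Fin.ext h') h0
    · refine absurd (Fin.ext ?_) h1
      rw [fin_val_one hn]; exact h'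
  · exact h

lemma fin_ne_zero_one {j : Fin (n+1)} (hn : 2 ≤ n) (hj : 2 ≤ (j:ℕ)) : j ≠ 0 ∧ j ≠ 1 := by
  constructor
  · intro h; rw [h] at hj; simp at hj
  · intro h; rw [h, fin_val_one hn] at hj; omega

lemma gradationBasis_zero : gradationBasis n 0 = C (Real.sqrt 2) * (uvPoly n).1 := by
  simp [gradationBasis]

lemma gradationBasis_one (hn : 2 ≤ n) :
    gradationBasis n 1 = C (Real.sqrt 2) * (uvPoly n).2 := by
  have hne : (1 : Fin (n+1)) ≠ 0 := by
    intro h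
    have := congrArg Fin.val h
    rw [fin_val_one hn] at this; simp at this
  simp [gradationBasis, hne]

lemma gradationBasis_hi {j : Fin (n+1)} (hn : 2 ≤ n) (hj : 2 ≤ (j:ℕ)) :
    gradationBasis n j
      = (X 0 ^ 2 + X 1 ^ 2 - 1) * X 0 ^ ((j : ℕ) - 2) * X 1 ^ (n - (j : ℕ)) := by
  obtain ⟨h0, h1⟩ := fin_ne_zero_one hn hj
  simp [gradationBasis, h0, h1]

lemma coeff_gradationBasis_low {i j : Fin (n+1)} (hn : 2 ≤ n) (hi : 2 ≤ (i:ℕ)) :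
    coeff (Finsupp.single 0 ((i:ℕ)-2) + Finsupp.single 1 (n-(i:ℕ)))
      (gradationBasis n j) = if j = i then -1 else 0 := by
  have hin : (i:ℕ) ≤ n := Nat.lt_succ_iff.mp i.isLt
  have hjn : (j:ℕ) ≤ n := Nat.lt_succ_iff.mp j.isLt
  by_cases hj0 : j = 0
  · rw [hj0, if_neg (by intro h; rw [← h] at hi; simp at hi), gradationBasis_zero]
    rw [coeff_C_mul, (uvPoly_homog n).1.coeff_eq_zero (by rw [degree_pair]; omega), mul_zero]
  · by_cases hj1 : j = 1
    · rw [hj1, if_neg (by intro h; rw [← h, fin_val_one hn] at hi; omega),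
        gradationBasis_one hn]
      rw [coeff_C_mul, (uvPoly_homog n).2.coeff_eq_zero (by rw [degree_pair]; omega), mul_zero]
    · have hj2 : 2 ≤ (j:ℕ) := fin_two_le hn hj0 hj1
      rw [gradationBasis_hi hn hj2, prod_expand]
      simp only [coeff_sub, coeff_add, coeff_monomial, pair_eq_iff]
      by_cases hji : j = i
      · subst hji
        rw [if_neg (by omega), if_neg (by omega), if_pos ⟨rfl, rfl⟩, if_pos rfl]
        norm_num
      · have hvi : (j:ℕ) ≠ (i:ℕ) := fun h => hji (Fin.ext h)
        rw [if_neg (by omega), if_neg (by omega), if_neg (by omega), if_neg hji]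
        norm_num

end Main

theorem null_polynomials_and_gradation_basis_circle :
    (∀ α β : ℕ,
      ∫ z, |(z.1 ^ 2 + z.2 ^ 2 - 1) * z.1 ^ α * z.2 ^ β| ^ 2 ∂circleMeasure = 0) ∧
    (∀ n : ℕ, 2 ≤ n →
      LinearIndependent ℝ (gradationBasis n) ∧
      ∀ i : Fin (n + 1), (gradationBasis n i).totalDegree = n) := by
  have sqrt2_pos : (0:ℝ) < Real.sqrt 2 := Real.sqrt_pos.mpr (by norm_num)
  have sqrt2_ne : Real.sqrt 2 ≠ 0 := ne_of_gt sqrt2_pos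
  constructor
  · intro α β
    rw [circleMeasure, integral_map
      ((Real.continuous_cos.prodMk Real.continuous_sin).aemeasurable)
      (Continuous.aestronglyMeasurable (by fun_prop))]
    simp [Real.cos_sq_add_sin_sq]
  · intro n hn
    constructor
    · rw [Fintype.linearIndependent_iff]
      intro g hg
      have hsum : ∀ m : Fin 2 →₀ ℕ, (∑ i, g i * coeff m (gradationBasis n i)) = 0 := by
        intro m
        have h := congrArg (coeff m) hg
        rw [coeff_sum] at h
        simpa [coeff_smul, smul_eq_mul] using h
      have key2 : ∀ i : Fin (n+1), 2 ≤ (i:ℕ) → g i = 0 := by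
        intro i hi
        have h := hsum (Finsupp.single 0 ((i:ℕ)-2) + Finsupp.single 1 (n-(i:ℕ)))
        rw [Finset.sum_eq_single i (fun j _ hj => by
            rw [coeff_gradationBasis_low hn hi, if_neg hj, mul_zero])
          (fun h' => absurd (Finset.mem_univ i) h')] at h
        rw [coeff_gradationBasis_low hn hi, if_pos rfl] at h
        linarith
      have key0 : g 0 = 0 := by
        have h := hsum (Finsupp.single 0 n)
        rw [Finset.sum_eq_single 0 (fun j _ hj => by
            by_cases hj1 : j = 1
            · rw [hj1, gradationBasis_one hn, coeff_C_mul, (coeff_uv_xn n).2,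
                mul_zero, mul_zero]
            · rw [key2 j (fin_two_le hn hj hj1), zero_mul])
          (fun h' => absurd (Finset.mem_univ _) h')] at h
        rw [gradationBasis_zero, coeff_C_mul, (coeff_uv_xn n).1, mul_one] at h
        exact (mul_eq_zero.mp h).resolve_right sqrt2_ne
      have key1 : g 1 = 0 := by
        obtain ⟨k, rfl⟩ : ∃ k, n = k + 1 := ⟨n-1, by omega⟩
        have h := hsum (Finsupp.single 0 k + Finsupp.single 1 1)
        rw [Finset.sum_eq_single 1 (fun j _ hj => by
            by_cases hj0 : j = 0
            · rw [hj0, gradationBasis_zero, coeff_C_mul, (coeff_uv_xy k).1,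
                mul_zero, mul_zero]
            · rw [key2 j (fin_two_le hn hj0 hj), zero_mul])
          (fun h' => absurd (Finset.mem_univ _) h')] at h
        rw [gradationBasis_one hn, coeff_C_mul, (coeff_uv_xy k).2] at h
        have hne : Real.sqrt 2 * ((k:ℝ)+1) ≠ 0 := by positivity
        exact (mul_eq_zero.mp h).resolve_right hne
      intro i
      by_cases h0 : i = 0
      · rw [h0]; exact key0
      by_cases h1 : i = 1
      · rw [h1]; exact key1
      exact key2 i (fin_two_le hn h0 h1)
    · intro i
      by_cases h0 : i = 0
      · rw [h0, gradationBasis_zero]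
        refine IsHomogeneous.totalDegree ?_ ?_
        · simpa using (isHomogeneous_C (Fin 2) (Real.sqrt 2)).mul (uvPoly_homog n).1
        · intro hzero
          have := congrArg (coeff (Finsupp.single 0 n)) hzero
          rw [coeff_C_mul, (coeff_uv_xn n).1, mul_one, coeff_zero] at this
          exact sqrt2_ne this
      by_cases h1 : i = 1
      · rw [h1, gradationBasis_one hn]
        refine IsHomogeneous.totalDegree ?_ ?_
        · simpa using (isHomogeneous_C (Fin 2) (Real.sqrt 2)).mul (uvPoly_homog n).2
        · intro hzero
          obtain ⟨k, rfl⟩ : ∃ k, n = k + 1 := ⟨n-1, by omega⟩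
          have := congrArg (coeff (Finsupp.single 0 k + Finsupp.single 1 1)) hzero
          rw [coeff_C_mul, (coeff_uv_xy k).2, coeff_zero] at this
          have hne : Real.sqrt 2 * ((k:ℝ)+1) ≠ 0 := by positivity
          exact hne this
      · have hi := fin_two_le hn h0 h1
        have hin : (i:ℕ) ≤ n := Nat.lt_succ_iff.mp i.isLt
        rw [gradationBasis_hi hn hi, td_prod]
        omega
end
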